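/- Let E be a Banach space, X a Banach lattice, T : E → X a nonzero bounded linear operator, and let (Y₁, U₁, V₁) and (Y₂, U₂, V₂) be Class C factorizations of T. Then the following are equivalent: (a) there is a bounded linear map φ : Y₁ → Y₂ such that U₂ = φ∘U₁ and V₁ = V₂∘φ; (b) there is a positive constant c such that V₁(B_{Y₁}) ⊆ c·V₂(B_{Y₂}). Moreover, when (a) holds, φ is necessarily of Class C. -/

import Mathlib

noncomputable section

open scoped Pointwise

/-- A map between lattices is a lattice homomorphism if it preserves binary suprema. -/
def IsLatHom {X Y : Type*} [Lattice X] [Lattice Y] (f : X → Y) : Prop :=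
  ∀ a b : X, f (a ⊔ b) = f a ⊔ f b

/-- A map is interval preserving if it maps order intervals `[0, x]` onto `[0, f x]`. -/
def IsIntervalPreserving {X Y : Type*} [Lattice X] [Zero X] [Lattice Y] [Zero Y]
    (f : X → Y) : Prop :=
  ∀ x : X, 0 ≤ x → f '' Set.Icc 0 x = Set.Icc 0 (f x)

/-- An operator `V : Y → X` between Banach lattices is of Class 𝒞 if it is an injective,
interval preserving lattice homomorphism whose image of the closed unit ball is closed. -/
def IsClassC {Y X : Type*} [NormedAddCommGroup Y] [Lattice Y] [HasSolidNorm Y]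
    [IsOrderedAddMonoid Y] [NormedSpace ℝ Y]
    [NormedAddCommGroup X] [Lattice X] [HasSolidNorm X] [IsOrderedAddMonoid X]
    [NormedSpace ℝ X] (V : Y →L[ℝ] X) : Prop :=
  Function.Injective ⇑V ∧ IsLatHom ⇑V ∧ IsIntervalPreserving ⇑V ∧
    IsClosed (⇑V '' Metric.closedBall 0 1)

/-!
As `V₂` is injective, a map `φ` with `V₁ = V₂ ∘ φ` is `V₂⁻¹ ∘ V₁`, and then `U₂ = φ ∘ U₁`
follows from `V₂ ∘ U₂ = T = V₁ ∘ U₁`. The inclusion `V₁(B) ⊆ c • V₂(B)` says precisely that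
`V₂⁻¹ ∘ V₁` is defined everywhere and bounded by `|c|`; conversely `V₂ ∘ φ` maps the unit ball
into `‖φ‖ • V₂(B)`. Injectivity of `V₂` also transfers the Class 𝒞 properties of `V₁` to `φ`;
in particular `φ(B) = V₂⁻¹(V₁(B))` is closed.
-/

open Metric Set

section LatticeMaps

variable {X Y Z : Type*} [Lattice X] [Lattice Y] [Lattice Z]

theorem IsLatHom.monotone {f : X → Y} (hf : IsLatHom f) : Monotone f := fun a b hab => by
  rw [← sup_eq_right.mpr hab, hf]
  exact le_sup_left

theorem IsLatHom.of_comp {f : X → Y} {g : Y → Z} (hg : IsLatHom g) (hg_inj : g.Injective)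
    (hgf : IsLatHom (g ∘ f)) : IsLatHom f := fun a b =>
  hg_inj <| by rw [hg]; exact hgf a b

theorem IsIntervalPreserving.of_comp [Zero X] [Zero Y] [Zero Z] {f : X → Y} {g : Y → Z}
    (hg : Monotone g) (hg_inj : g.Injective) (hg0 : g 0 = 0) (hf : Monotone f) (hf0 : f 0 = 0)
    (hgf : IsIntervalPreserving (g ∘ f)) : IsIntervalPreserving f := by
  intro x hx
  refine subset_antisymm ?_ ?_
  · rintro _ ⟨w, hw, rfl⟩
    exact ⟨hf0 ▸ hf hw.1, hf hw.2⟩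
  · rintro z ⟨hz0, hzx⟩
    have hgz : g z ∈ (g ∘ f) '' Icc 0 x := hgf x hx ▸ ⟨hg0 ▸ hg hz0, hg hzx⟩
    obtain ⟨w, hw, hgw⟩ := hgz
    exact ⟨w, hw, hg_inj hgw⟩

end LatticeMaps

section ClosedUnitBall

variable {Y₁ Y₂ X : Type*} [NormedAddCommGroup Y₁] [NormedSpace ℝ Y₁]
  [NormedAddCommGroup Y₂] [NormedSpace ℝ Y₂] [NormedAddCommGroup X] [NormedSpace ℝ X]

theorem ContinuousLinearMap.image_comp_closedBall_subset (V : Y₂ →L[ℝ] X) (φ : Y₁ →L[ℝ] Y₂)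
    {c : ℝ} (hc : ‖φ‖ ≤ c) :
    ⇑(V.comp φ) '' closedBall 0 1 ⊆ c • (⇑V '' closedBall 0 1) := by
  have hφ : ⇑φ '' closedBall 0 1 ⊆ c • closedBall 0 1 := by
    rw [smul_unitClosedBall_of_nonneg ((norm_nonneg φ).trans hc)]
    simpa using (φ.lipschitz.mapsTo_closedBall 0 1).image_subset.trans
      (closedBall_subset_closedBall (by simpa using hc))
  rw [← image_smul_set, ContinuousLinearMap.coe_comp, image_comp]
  exact image_mono hφ

theorem exists_norm_le_apply_eq_of_image_closedBall_subset {V₁ : Y₁ →L[ℝ] X} {V₂ : Y₂ →L[ℝ] X}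
    {c : ℝ} (h : ⇑V₁ '' closedBall 0 1 ⊆ c • (⇑V₂ '' closedBall 0 1)) (y : Y₁) :
    ∃ z, ‖z‖ ≤ |c| * ‖y‖ ∧ V₂ z = V₁ y := by
  have hy : y ∈ ‖y‖ • closedBall (0 : Y₁) 1 := by
    rw [smul_unitClosedBall_of_nonneg (norm_nonneg y)]
    simp
  have hVy : V₁ y ∈ ⇑V₂ '' ((‖y‖ * c) • closedBall 0 1) := by
    rw [image_smul_set, mul_smul]
    exact smul_set_mono h (image_smul_set V₁ _ _ ▸ mem_image_of_mem V₁ hy)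
  rw [smul_unitClosedBall] at hVy
  obtain ⟨z, hz, hVz⟩ := hVy
  exact ⟨z, by simpa [abs_mul, mul_comm] using hz, hVz⟩

theorem exists_comp_eq_of_image_closedBall_subset {V₁ : Y₁ →L[ℝ] X} {V₂ : Y₂ →L[ℝ] X}
    (hV₂ : Function.Injective V₂) {c : ℝ}
    (h : ⇑V₁ '' closedBall 0 1 ⊆ c • (⇑V₂ '' closedBall 0 1)) :
    ∃ φ : Y₁ →L[ℝ] Y₂, V₂.comp φ = V₁ := by
  choose f hf_norm hf using exists_norm_le_apply_eq_of_image_closedBall_subset h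
  let φ : Y₁ →ₗ[ℝ] Y₂ :=
    { toFun := f
      map_add' := fun a b => hV₂ <| by simp only [map_add, hf]
      map_smul' := fun r a => hV₂ <| by simp only [map_smul, hf, RingHom.id_apply] }
  exact ⟨φ.mkContinuous |c| hf_norm, ContinuousLinearMap.ext hf⟩

end ClosedUnitBall

theorem IsClassC.of_comp {Y₁ Y₂ X : Type*}
    [NormedAddCommGroup Y₁] [Lattice Y₁] [HasSolidNorm Y₁] [IsOrderedAddMonoid Y₁]
    [NormedSpace ℝ Y₁]
    [NormedAddCommGroup Y₂] [Lattice Y₂] [HasSolidNorm Y₂] [IsOrderedAddMonoid Y₂]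
    [NormedSpace ℝ Y₂]
    [NormedAddCommGroup X] [Lattice X] [HasSolidNorm X] [IsOrderedAddMonoid X]
    [NormedSpace ℝ X] {V : Y₂ →L[ℝ] X} {φ : Y₁ →L[ℝ] Y₂}
    (hV : IsClassC V) (hVφ : IsClassC (V.comp φ)) : IsClassC φ := by
  obtain ⟨hV_inj, hV_lat, -, -⟩ := hV
  obtain ⟨hVφ_inj, hVφ_lat, hVφ_int, hVφ_closed⟩ := hVφ
  have hφ_lat : IsLatHom φ := hV_lat.of_comp hV_inj hVφ_lat
  refine ⟨.of_comp hVφ_inj, hφ_lat,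
    .of_comp hV_lat.monotone hV_inj V.map_zero hφ_lat.monotone φ.map_zero hVφ_int, ?_⟩
  rw [← hV_inj.preimage_image (⇑φ '' _), ← image_comp]
  exact hVφ_closed.preimage V.continuous

theorem classC_factorization_comparison_general
    {E : Type*} [NormedAddCommGroup E] [NormedSpace ℝ E]
    {X : Type*} [NormedAddCommGroup X] [Lattice X] [HasSolidNorm X]
    [IsOrderedAddMonoid X] [NormedSpace ℝ X]
    {Y₁ : Type*} [NormedAddCommGroup Y₁] [Lattice Y₁] [HasSolidNorm Y₁]
    [IsOrderedAddMonoid Y₁] [NormedSpace ℝ Y₁]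
    {Y₂ : Type*} [NormedAddCommGroup Y₂] [Lattice Y₂] [HasSolidNorm Y₂]
    [IsOrderedAddMonoid Y₂] [NormedSpace ℝ Y₂]
    (T : E →L[ℝ] X)
    (U₁ : E →L[ℝ] Y₁) (V₁ : Y₁ →L[ℝ] X) (U₂ : E →L[ℝ] Y₂) (V₂ : Y₂ →L[ℝ] X)
    (h₁ : IsClassC V₁) (hf₁ : T = V₁.comp U₁)
    (h₂ : IsClassC V₂) (hf₂ : T = V₂.comp U₂) :
    ((∃ φ : Y₁ →L[ℝ] Y₂, U₂ = φ.comp U₁ ∧ V₁ = V₂.comp φ) ↔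
      (∃ c > (0 : ℝ),
        ⇑V₁ '' Metric.closedBall 0 1 ⊆ c • (⇑V₂ '' Metric.closedBall 0 1))) ∧
    (∀ φ : Y₁ →L[ℝ] Y₂, U₂ = φ.comp U₁ → V₁ = V₂.comp φ → IsClassC φ) := by
  refine ⟨⟨?_, ?_⟩, fun φ _ hV => h₂.of_comp (hV ▸ h₁)⟩
  · rintro ⟨φ, -, rfl⟩
    exact ⟨‖φ‖ + 1, by positivity, V₂.image_comp_closedBall_subset φ (by linarith)⟩
  · rintro ⟨c, -, hsub⟩
    obtain ⟨φ, hφ⟩ := exists_comp_eq_of_image_closedBall_subset h₂.1 hsub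
    refine ⟨φ, ContinuousLinearMap.ext fun e => h₂.1 ?_, hφ.symm⟩
    simp only [← ContinuousLinearMap.comp_apply, ← ContinuousLinearMap.comp_assoc, hφ, ← hf₁,
      ← hf₂]

/-- Comparison of two Class 𝒞 factorizations of a nonzero operator
`T : E → X`: a connecting operator `φ` exists iff the unit-ball images are comparable,
and such a `φ` is automatically of Class 𝒞. -/
theorem classC_factorization_comparison
    {E : Type*} [NormedAddCommGroup E] [NormedSpace ℝ E] [CompleteSpace E]
    {X : Type*} [NormedAddCommGroup X] [Lattice X] [HasSolidNorm X]
    [IsOrderedAddMonoid X] [NormedSpace ℝ X] [PosSMulStrictMono ℝ X]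
    [CompleteSpace X]
    {Y₁ : Type*} [NormedAddCommGroup Y₁] [Lattice Y₁] [HasSolidNorm Y₁]
    [IsOrderedAddMonoid Y₁] [NormedSpace ℝ Y₁] [PosSMulStrictMono ℝ Y₁]
    [CompleteSpace Y₁]
    {Y₂ : Type*} [NormedAddCommGroup Y₂] [Lattice Y₂] [HasSolidNorm Y₂]
    [IsOrderedAddMonoid Y₂] [NormedSpace ℝ Y₂] [PosSMulStrictMono ℝ Y₂]
    [CompleteSpace Y₂]
    (T : E →L[ℝ] X) (hT : T ≠ 0)
    (U₁ : E →L[ℝ] Y₁) (V₁ : Y₁ →L[ℝ] X) (U₂ : E →L[ℝ] Y₂) (V₂ : Y₂ →L[ℝ] X)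
    (h₁ : IsClassC V₁) (hf₁ : T = V₁.comp U₁)
    (h₂ : IsClassC V₂) (hf₂ : T = V₂.comp U₂) :
    ((∃ φ : Y₁ →L[ℝ] Y₂, U₂ = φ.comp U₁ ∧ V₁ = V₂.comp φ) ↔
      (∃ c > (0 : ℝ),
        ⇑V₁ '' Metric.closedBall 0 1 ⊆ c • (⇑V₂ '' Metric.closedBall 0 1))) ∧
    (∀ φ : Y₁ →L[ℝ] Y₂, U₂ = φ.comp U₁ → V₁ = V₂.comp φ → IsClassC φ) :=
  classC_factorization_comparison_general T U₁ V₁ U₂ V₂ h₁ hf₁ h₂ hf₂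

end
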